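/- Let m be a prime, n ≥ 2 an integer, 𝕄 a finite set, and p : 𝕄 × (ZMod m)^n → ℝ a parity-oblivious classical encoding, i.e., p(M|x) ≥ 0, Σ_{M∈𝕄} p(M|x) = 1 for every x, and for every mask r and all k,k′ ∈ ZMod m, Σ_{x : r·x = k} p(M|x) = Σ_{x : r·x = k′} p(M|x) for every M. Then there exist p_0 ≥ 0 and K_1,…,K_n ≥ 0 with p_0 + Σ_i K_i = 1, a probability distribution q_0 on 𝕄, and for each i with K_i > 0 conditional distributions q_i(·|l) on 𝕄 for l ∈ ZMod m, such that p(M|x) = p_0 q_0(M) + Σ_{i=1}^{n} K_i q_i(M|x_i) for all M and x. -/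

import Mathlib

/-!
Over `F = 𝔽_q`, a function on `ι → F` is determined by its sums over the affine hyperplanes
`{x | r ⬝ᵥ x = k}` with `r ≠ 0`: summed over all `r`, the hyperplanes through `x` count `x` itself
`q ^ |ι|` times and every other point `q ^ (|ι| - 1)` times. For a parity-oblivious `P` the sum
over such a hyperplane is `(∑ P) / q` when `r` has two nonzero coordinates and a marginal sum when
it has one; either way it agrees with the corresponding sum of
`marginalExpansion P = q * ∑ i, marginal P i (x i) - (|ι| - 1) * ∑ P`, so `q ^ |ι| * P` is a
constant plus single-digit terms. Shifting each single-digit term by its minimum over the digit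
makes every term nonnegative, and normalising them gives the convex decomposition.
-/

open Finset

section Fibers

variable {G H : Type*} [AddGroup G] [Fintype G] [AddGroup H] [Fintype H] [DecidableEq H]

theorem AddMonoidHom.card_fiber_mul_card_of_surjective (φ : G →+ H)
    (hφ : Function.Surjective φ) (h : H) :
    #{x | φ x = h} * Fintype.card H = Fintype.card G := calc
  _ = ∑ h' : H, #{x | φ x = h'} := by
    rw [sum_congr rfl fun h' _ => card_fiber_eq_of_mem_range φ (hφ h') (hφ h), sum_const,
      card_univ, smul_eq_mul, mul_comm]
  _ = Fintype.card G := (card_eq_sum_card_fiberwise fun x _ => mem_univ (φ x)).symm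

theorem AddMonoidHom.card_nsmul_sum_comp_of_surjective {M : Type*} [AddCommMonoid M]
    (φ : G →+ H) (hφ : Function.Surjective φ) (f : H → M) :
    Fintype.card H • ∑ x, f (φ x) = Fintype.card G • ∑ h, f h := by
  simp_rw [← sum_fiberwise' univ φ f, sum_const, smul_sum, smul_smul, mul_comm (Fintype.card H),
    φ.card_fiber_mul_card_of_surjective hφ]

end Fibers

section Hyperplanes

variable {F ι : Type*} [Field F] [Fintype ι] [DecidableEq ι]

theorem dotProduct_left_surjective {r : ι → F} (hr : r ≠ 0) : Function.Surjective (r ⬝ᵥ ·) := by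
  obtain ⟨j, hj⟩ := Function.ne_iff.mp hr
  exact fun c => ⟨Pi.single j ((r j)⁻¹ * c), by simp [dotProduct_single, mul_inv_cancel_left₀ hj]⟩

theorem dotProduct_prod_eval_surjective {r : ι → F} {i j : ι} (hji : j ≠ i) (hrj : r j ≠ 0) :
    Function.Surjective fun x => (r ⬝ᵥ x, x i) := by
  rintro ⟨c, b⟩
  refine ⟨Pi.single i b + Pi.single j ((r j)⁻¹ * (c - r i * b)), ?_⟩
  simp [dotProduct_add, dotProduct_single, hrj, hji]

variable [Fintype F] [DecidableEq F]

/-- All of `ι → F` or `∅` when `r = 0`. -/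
def hyperplane (r : ι → F) (k : F) : Finset (ι → F) := {x | r ⬝ᵥ x = k}

theorem mem_hyperplane {r x : ι → F} {k : F} : x ∈ hyperplane r k ↔ r ⬝ᵥ x = k := by
  simp [hyperplane]

theorem card_hyperplane_mul {r : ι → F} (hr : r ≠ 0) (k : F) :
    #(hyperplane r k) * Fintype.card F = Fintype.card (ι → F) :=
  (AddMonoidHom.mk' (r ⬝ᵥ ·) (dotProduct_add r)).card_fiber_mul_card_of_surjective
    (dotProduct_left_surjective hr) k

theorem sum_hyperplane_comp_eval {M : Type*} [AddCommMonoid M] {r : ι → F} {i j : ι}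
    (hji : j ≠ i) (hrj : r j ≠ 0) (k : F) (f : F → M) :
    (Fintype.card F * Fintype.card F) • ∑ x ∈ hyperplane r k, f (x i) =
      Fintype.card (ι → F) • ∑ l, f l := by
  have := ((AddMonoidHom.mk' (r ⬝ᵥ ·) (dotProduct_add r)).prod
    (Pi.evalAddMonoidHom (fun _ => F) i)).card_nsmul_sum_comp_of_surjective
    (dotProduct_prod_eval_surjective hji hrj) fun p => if p.1 = k then f p.2 else 0
  simpa [Fintype.sum_prod_type, hyperplane, sum_filter] using this

theorem sum_eq_card_nsmul_sum_hyperplane {M : Type*} [AddCommMonoid M] (g : (ι → F) → M)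
    (r : ι → F) (k : F) (h : ∀ k', ∑ x ∈ hyperplane r k', g x = ∑ x ∈ hyperplane r k, g x) :
    ∑ x, g x = Fintype.card F • ∑ x ∈ hyperplane r k, g x := by
  rw [← sum_fiberwise univ (r ⬝ᵥ ·) g]
  exact (sum_congr rfl fun k' _ => h k').trans (by rw [sum_const, card_univ])

theorem hyperplane_eq_filter_eval {r : ι → F} {j : ι} (hr : ∀ i ≠ j, r i = 0) (hrj : r j ≠ 0)
    (k : F) : hyperplane r k = ({x | x j = (r j)⁻¹ * k} : Finset (ι → F)) := by
  have hr : r = Pi.single j (r j) := by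
    ext i; by_cases hij : i = j <;> simp [hij, hr]
  ext x
  rw [mem_hyperplane, hr, single_dotProduct, Pi.single_eq_same]
  simp [eq_inv_mul_iff_mul_eq₀ hrj]

theorem card_filter_dotProduct_eq_mul {x y : ι → F} (hxy : x ≠ y) :
    #{r : ι → F | r ⬝ᵥ x = r ⬝ᵥ y} * Fintype.card F = Fintype.card (ι → F) := by
  have hφ : Function.Surjective ((x - y) ⬝ᵥ ·) := dotProduct_left_surjective (sub_ne_zero.2 hxy)
  rw [← (AddMonoidHom.mk' _ (dotProduct_add (x - y))).card_fiber_mul_card_of_surjective hφ 0]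
  congr 2
  ext r
  simp [dotProduct_comm (x - y), dotProduct_sub, sub_eq_zero]

variable {K : Type*} [Field K] [CharZero K]

theorem card_mul_sum_sum_hyperplane (g : (ι → F) → K) (x : ι → F) :
    Fintype.card F * ∑ r, ∑ y ∈ hyperplane r (r ⬝ᵥ x), g y =
      Fintype.card (ι → F) * ∑ y, g y +
        ((Fintype.card F : K) - 1) * Fintype.card (ι → F) * g x := by
  have hcount : ∀ y, Fintype.card F * (#{r : ι → F | r ⬝ᵥ y = r ⬝ᵥ x} : K) =
      Fintype.card (ι → F) +
        if y = x then ((Fintype.card F : K) - 1) * Fintype.card (ι → F) else 0 := by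
    intro y
    split_ifs with hyx
    · simp [hyx]
      ring
    · rw [add_zero]
      exact_mod_cast (mul_comm _ _).trans (card_filter_dotProduct_eq_mul hyx)
  simp_rw [hyperplane, sum_filter]
  rw [sum_comm]
  simp_rw [← sum_filter, sum_const, nsmul_eq_mul, mul_sum, ← mul_assoc, hcount, add_mul,
    sum_add_distrib, ite_mul, zero_mul, sum_ite_eq', mem_univ, if_true]

theorem eq_zero_of_sum_hyperplane_eq_zero [Nonempty ι] {g : (ι → F) → K}
    (h : ∀ r ≠ 0, ∀ k, ∑ x ∈ hyperplane r k, g x = 0) : g = 0 := by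
  have htotal : ∑ x, g x = 0 := by
    obtain ⟨i⟩ := ‹Nonempty ι›
    have hr : (Pi.single i 1 : ι → F) ≠ 0 := by simp
    rw [sum_eq_card_nsmul_sum_hyperplane g _ 0 fun k => by rw [h _ hr, h _ hr], h _ hr,
      smul_zero]
  have hlines : ∀ x, ∑ r, ∑ y ∈ hyperplane r (r ⬝ᵥ x), g y = 0 := fun x =>
    sum_eq_zero fun r _ => by
      obtain rfl | hr := eq_or_ne r 0
      · simpa [hyperplane] using htotal
      · exact h r hr _
  funext x
  have hq : Fintype.card F ≠ 1 := Fintype.one_lt_card.ne'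
  have := card_mul_sum_sum_hyperplane g x
  rw [hlines, htotal] at this
  simpa [sub_eq_zero, hq] using this

end Hyperplanes

section Marginals

variable {F ι M : Type*} [Fintype F] [DecidableEq F] [Fintype ι] [DecidableEq ι] [AddCommMonoid M]

def marginal (P : (ι → F) → M) (i : ι) (l : F) : M :=
  ∑ x ∈ ({x | x i = l} : Finset (ι → F)), P x

theorem sum_marginal (P : (ι → F) → M) (i : ι) : ∑ l, marginal P i l = ∑ x, P x := by
  rw [← sum_fiberwise univ (fun x => x i) P]
  rfl

end Marginals

section ParityOblivious

variable {F ι : Type*} [Field F] [Fintype F] [DecidableEq F] [Fintype ι] [DecidableEq ι]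

def IsParityOblivious {M : Type*} [AddCommMonoid M] (P : (ι → F) → M) : Prop :=
  ∀ r : ι → F, 2 ≤ #{i | r i ≠ 0} → ∀ k k',
    ∑ x ∈ hyperplane r k, P x = ∑ x ∈ hyperplane r k', P x

theorem card_mul_card_mul_sum_hyperplane_marginal {R : Type*} [Semiring R] {r : ι → F} {i j : ι}
    (hji : j ≠ i) (hrj : r j ≠ 0) (P : (ι → F) → R) (k : F) :
    (Fintype.card F * Fintype.card F : R) * ∑ x ∈ hyperplane r k, marginal P i (x i) =
      Fintype.card (ι → F) * ∑ x, P x := by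
  have := sum_hyperplane_comp_eval hji hrj k (marginal P i)
  rwa [sum_marginal, nsmul_eq_mul, nsmul_eq_mul, Nat.cast_mul] at this

variable {K : Type*} [Field K]

def marginalExpansion (P : (ι → F) → K) (x : ι → F) : K :=
  Fintype.card F * ∑ i, marginal P i (x i) - (Fintype.card ι - 1) * ∑ y, P y

theorem sum_hyperplane_marginalExpansion (P : (ι → F) → K) (r : ι → F) (k : F) :
    ∑ x ∈ hyperplane r k, marginalExpansion P x =
      Fintype.card F * ∑ i, ∑ x ∈ hyperplane r k, marginal P i (x i) -
        (Fintype.card ι - 1) * #(hyperplane r k) * ∑ y, P y := by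
  simp only [marginalExpansion, sum_sub_distrib, ← mul_sum, sum_const, nsmul_eq_mul]
  rw [sum_comm]
  ring

theorem sum_hyperplane_marginalExpansion_of_forall_exists_ne [Nonempty ι] {r : ι → F}
    (hr : ∀ j, ∃ i ≠ j, r i ≠ 0) (P : (ι → F) → K) (k : F) :
    Fintype.card F * ∑ x ∈ hyperplane r k, marginalExpansion P x =
      Fintype.card (ι → F) * ∑ x, P x := by
  obtain ⟨i₀, -, hi₀⟩ := hr (Classical.arbitrary ι)
  have hcard : (#(hyperplane r k) : K) * Fintype.card F = Fintype.card (ι → F) := by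
    rw [← Nat.cast_mul, card_hyperplane_mul (fun h0 => hi₀ (congrFun h0 i₀)) k]
  have hM : Fintype.card F * Fintype.card F * ∑ i, ∑ x ∈ hyperplane r k, marginal P i (x i) =
      Fintype.card ι * (Fintype.card (ι → F) * ∑ y, P y) := by
    rw [mul_sum, sum_congr rfl fun i _ => ?_, sum_const, card_univ, nsmul_eq_mul]
    obtain ⟨j, hji, hrj⟩ := hr i
    exact card_mul_card_mul_sum_hyperplane_marginal hji hrj P k
  rw [sum_hyperplane_marginalExpansion]
  linear_combination hM - (Fintype.card ι - 1) * (∑ y, P y) * hcard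

variable [CharZero K]

theorem sum_hyperplane_marginalExpansion_of_eq_single {r : ι → F} {j : ι}
    (hr : ∀ i ≠ j, r i = 0) (hrj : r j ≠ 0) (P : (ι → F) → K) (k : F) :
    ∑ x ∈ hyperplane r k, marginalExpansion P x =
      Fintype.card (ι → F) * ∑ x ∈ hyperplane r k, P x := by
  set c := (r j)⁻¹ * k
  have hhyp := hyperplane_eq_filter_eval hr hrj k
  have hcard : (#(hyperplane r k) : K) * Fintype.card F = Fintype.card (ι → F) := by
    rw [← Nat.cast_mul, card_hyperplane_mul (fun h0 => hrj (congrFun h0 j)) k]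
  have hP : ∑ x ∈ hyperplane r k, P x = marginal P j c := by rw [hhyp]; rfl
  have hMj : ∑ x ∈ hyperplane r k, marginal P j (x j) = #(hyperplane r k) * marginal P j c := by
    rw [← nsmul_eq_mul, ← sum_const]
    exact sum_congr rfl fun x hx => by rw [hhyp, mem_filter] at hx; rw [hx.2]
  have hMi : Fintype.card F * Fintype.card F *
      ∑ i ∈ univ.erase j, ∑ x ∈ hyperplane r k, marginal P i (x i) =
        (Fintype.card ι - 1) * (Fintype.card (ι → F) * ∑ y, P y) := by
    rw [mul_sum, sum_congr rfl fun i hi =>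
      card_mul_card_mul_sum_hyperplane_marginal (ne_of_mem_erase hi).symm hrj P k, sum_const,
      nsmul_eq_mul, cast_card_erase_of_mem (mem_univ j), card_univ]
  have hq : (Fintype.card F : K) ≠ 0 := Nat.cast_ne_zero.2 Fintype.card_ne_zero
  refine mul_left_cancel₀ hq ?_
  rw [sum_hyperplane_marginalExpansion, ← add_sum_erase _ _ (mem_univ j), hP, hMj]
  linear_combination (Fintype.card F * marginal P j c - (Fintype.card ι - 1) * ∑ y, P y) * hcard
    + hMi

theorem IsParityOblivious.card_mul_eq_marginalExpansion [Nonempty ι] {P : (ι → F) → K}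
    (hP : IsParityOblivious P) (x : ι → F) :
    Fintype.card (ι → F) * P x = marginalExpansion P x := by
  suffices (fun x => Fintype.card (ι → F) * P x - marginalExpansion P x) = 0 from
    sub_eq_zero.1 (congrFun this x)
  refine eq_zero_of_sum_hyperplane_eq_zero fun r hr k => ?_
  rw [sum_sub_distrib, ← mul_sum, sub_eq_zero]
  by_cases hsingle : ∃ j, ∀ i ≠ j, r i = 0
  · obtain ⟨j, hj⟩ := hsingle
    have hrj : r j ≠ 0 := fun h0 => hr (funext fun i => by by_cases hij : i = j <;> simp_all)
    exact (sum_hyperplane_marginalExpansion_of_eq_single hj hrj P k).symm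
  · push Not at hsingle
    have hsupp : 2 ≤ #{i | r i ≠ 0} := by
      obtain ⟨j, hj⟩ := Function.ne_iff.mp hr
      obtain ⟨i, hij, hi⟩ := hsingle j
      exact one_lt_card.2 ⟨i, by simpa, j, by simpa, hij⟩
    have hS : (Fintype.card F : K) * ∑ x ∈ hyperplane r k, P x = ∑ x, P x := by
      rw [← nsmul_eq_mul, ← sum_eq_card_nsmul_sum_hyperplane P r k fun k' => hP r hsupp k' k]
    have hq : (Fintype.card F : K) ≠ 0 := Nat.cast_ne_zero.2 Fintype.card_ne_zero
    refine mul_left_cancel₀ hq ?_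
    rw [sum_hyperplane_marginalExpansion_of_forall_exists_ne hsingle, mul_left_comm, hS]

end ParityOblivious

section Decomposition

variable {𝕜 : Type*} [Field 𝕜] [LinearOrder 𝕜] [IsStrictOrderedRing 𝕜]

theorem exists_mem_stdSimplex_eq_sum_smul {α : Type*} [Fintype α] [Nonempty α] {w : α → 𝕜}
    (hw : ∀ a, 0 ≤ w a) : ∃ q ∈ stdSimplex 𝕜 α, w = (∑ a, w a) • q := by
  classical
  by_cases hs : ∑ a, w a = 0
  · have hw0 : w = 0 := funext fun a =>
      (sum_eq_zero_iff_of_nonneg fun a _ => hw a).1 hs a (mem_univ a)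
    exact ⟨_, single_mem_stdSimplex 𝕜 (Classical.arbitrary α), by simp [hw0]⟩
  · refine ⟨(∑ a, w a)⁻¹ • w, ⟨fun a => ?_, ?_⟩, (smul_inv_smul₀ hs w).symm⟩
    · exact smul_nonneg (inv_nonneg.2 (sum_nonneg fun a _ => hw a)) (hw a)
    · simp [← mul_sum, inv_mul_cancel₀ hs]

variable {ι L : Type*} [Fintype ι]

theorem apply_eq_apply_of_sum_eq_const [DecidableEq ι] {β : Type*} [AddCommGroup β]
    {h : ι → L → β} {C : β} (hC : ∀ x : ι → L, ∑ i, h i (x i) = C) (i : ι) (l l' : L) :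
    h i l = h i l' := by
  have key : ∀ l'', h i l'' + ∑ j ∈ univ \ {i}, h j l = C := fun l'' => by
    rw [← hC (Function.update (fun _ => l) i l''), ← sum_update_of_mem (mem_univ i)]
    exact sum_congr rfl fun j _ => (Function.apply_update h _ i l'' j).symm
  exact add_right_cancel ((key l).trans (key l').symm)

variable [Fintype L] [Nonempty L]

theorem exists_nonneg_add_sum_of_nonneg {β : Type*} [AddCommGroup β] [LinearOrder β]
    [IsOrderedAddMonoid β] {h : (ι → L) → β} (hh : ∀ x, 0 ≤ h x) {c : β} {f : ι → L → β}
    (hf : ∀ x, h x = c + ∑ i, f i (x i)) :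
    ∃ (a : β) (g : ι → L → β), 0 ≤ a ∧ (∀ i l, 0 ≤ g i l) ∧ ∀ x, h x = a + ∑ i, g i (x i) := by
  choose xmin hxmin using fun i => exists_min_image univ (f i) univ_nonempty
  refine ⟨c + ∑ i, f i (xmin i), fun i l => f i l - f i (xmin i), ?_, fun i l => ?_, fun x => ?_⟩
  · exact hf xmin ▸ hh xmin
  · exact sub_nonneg.2 ((hxmin i).2 l (mem_univ l))
  · rw [hf, sum_sub_distrib]; abel

theorem exists_convex_decomposition_of_eq_add_sum [DecidableEq ι] {𝕄 : Type*} [Fintype 𝕄]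
    {p : 𝕄 → (ι → L) → 𝕜} (hp_nonneg : ∀ M x, 0 ≤ p M x) (hp_sum : ∀ x, ∑ M, p M x = 1)
    {c : 𝕄 → 𝕜} {f : ι → L → 𝕄 → 𝕜} (hf : ∀ M x, p M x = c M + ∑ i, f i (x i) M) :
    ∃ (p₀ : 𝕜) (K : ι → 𝕜) (q₀ : 𝕄 → 𝕜) (q : ι → L → 𝕄 → 𝕜),
      0 ≤ p₀ ∧ (∀ i, 0 ≤ K i) ∧ p₀ + ∑ i, K i = 1 ∧
      (∀ M, 0 ≤ q₀ M) ∧ (∑ M, q₀ M = 1) ∧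
      (∀ i, 0 < K i → ∀ l, (∀ M, 0 ≤ q i l M) ∧ ∑ M, q i l M = 1) ∧
      (∀ M x, p M x = p₀ * q₀ M + ∑ i, K i * q i (x i) M) := by
  choose a g ha hg hpg using fun M =>
    exists_nonneg_add_sum_of_nonneg (f := fun i l => f i l M) (hp_nonneg M) (hf M)
  obtain ⟨l₀⟩ := ‹Nonempty L›
  have : Nonempty 𝕄 := by
    obtain ⟨M, -, -⟩ := exists_ne_zero_of_sum_ne_zero ((hp_sum fun _ => l₀).trans_ne one_ne_zero)
    exact ⟨M⟩
  set K : ι → 𝕜 := fun i => ∑ M, g M i l₀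
  have hK : ∀ i l, ∑ M, g M i l = K i := by
    refine fun i l => apply_eq_apply_of_sum_eq_const (h := fun i l => ∑ M, g M i l)
      (C := 1 - ∑ M, a M) (fun x => ?_) i l l₀
    rw [sum_comm, ← hp_sum x, ← sum_sub_distrib]
    exact sum_congr rfl fun M _ => by rw [hpg]; abel
  obtain ⟨q₀, hq₀, ha_eq⟩ := exists_mem_stdSimplex_eq_sum_smul ha
  choose q hq hg_eq using fun i l => exists_mem_stdSimplex_eq_sum_smul fun M => hg M i l
  refine ⟨∑ M, a M, K, q₀, q, sum_nonneg fun M _ => ha M, fun i => sum_nonneg fun M _ => hg M i l₀,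
    ?_, hq₀.1, hq₀.2, fun i _ l => hq i l, fun M x => ?_⟩
  · rw [← hp_sum fun _ => l₀]
    simp only [hpg, sum_add_distrib, K]
    rw [sum_comm]
  · rw [hpg, congrFun ha_eq M]
    refine congrArg _ (sum_congr rfl fun i _ => ?_)
    rw [congrFun (hg_eq i (x i)) M, Pi.smul_apply, smul_eq_mul, hK]

end Decomposition

/-- **Convex single-digit decomposition of parity-oblivious classical encodings.** Let `m` be
prime, `n ≥ 2`, `𝕄` a finite message set, and `p` a parity-oblivious classical encoding.
Then `p` is a convex mixture of an input-independent channel `q₀` and single-digit channels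
`qᵢ(·|xᵢ)`. -/
theorem parity_oblivious_encoding_decomposition
    (m : ℕ) (hm : Nat.Prime m) [NeZero m] (n : ℕ) (hn : 2 ≤ n)
    (𝕄 : Type) [Fintype 𝕄]
    (p : 𝕄 → (Fin n → ZMod m) → ℝ)
    (hp_nonneg : ∀ M x, 0 ≤ p M x)
    (hp_sum : ∀ x, ∑ M, p M x = 1)
    (hPO : ∀ r : Fin n → ZMod m,
      2 ≤ (Finset.univ.filter fun i => r i ≠ 0).card →
      ∀ M, ∀ k k' : ZMod m,
        ∑ x ∈ Finset.univ.filter (fun x : Fin n → ZMod m => ∑ i, r i * x i = k), p M x =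
        ∑ x ∈ Finset.univ.filter (fun x : Fin n → ZMod m => ∑ i, r i * x i = k'), p M x) :
    ∃ (p₀ : ℝ) (K : Fin n → ℝ) (q₀ : 𝕄 → ℝ) (q : Fin n → ZMod m → 𝕄 → ℝ),
      0 ≤ p₀ ∧ (∀ i, 0 ≤ K i) ∧ p₀ + ∑ i, K i = 1 ∧
      (∀ M, 0 ≤ q₀ M) ∧ (∑ M, q₀ M = 1) ∧
      (∀ i, 0 < K i → ∀ l : ZMod m, (∀ M, 0 ≤ q i l M) ∧ ∑ M, q i l M = 1) ∧
      (∀ M x, p M x = p₀ * q₀ M + ∑ i, K i * q i (x i) M) := by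
  have : Fact m.Prime := ⟨hm⟩
  have : Nonempty (Fin n) := ⟨⟨0, by omega⟩⟩
  have hN : (Fintype.card (Fin n → ZMod m) : ℝ) ≠ 0 := Nat.cast_ne_zero.2 Fintype.card_ne_zero
  refine exists_convex_decomposition_of_eq_add_sum hp_nonneg hp_sum
    (c := fun M => -((n - 1) * ∑ y, p M y) / Fintype.card (Fin n → ZMod m))
    (f := fun i l M => m * marginal (p M) i l / Fintype.card (Fin n → ZMod m)) fun M x => ?_
  have hexp := IsParityOblivious.card_mul_eq_marginalExpansion
    (fun r hr k k' => hPO r hr M k k') x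
  rw [marginalExpansion, ZMod.card, Fintype.card_fin] at hexp
  rw [← sum_div, ← add_div, eq_div_iff hN, ← mul_sum]
  linarith
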